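/- Let 0 < θ < θ₀, Ψ'(s) = (θ/2)·log((1+s)/(1−s)) − θ₀·s for s ∈ (−1,1), s* = √(1 − θ/θ₀), and let α₀ ∈ (−1,0), β₀ ∈ (0,1) be the unique points with Ψ'(α₀) = Ψ'(s*) and Ψ'(β₀) = Ψ'(−s*). Then for every m ∈ (−1,1) there exist a, b ∈ (−1,1) with a ≤ m ≤ b such that: (i) Ψ'(r) < Ψ'(s) for all r ∈ (−1,m) and all s ∈ (b,1); and (ii) Ψ'(r) < Ψ'(s) for all r ∈ (−1,a) and all s ∈ (m,1). Moreover: if m ≤ α₀ or m ≥ β₀, then the choice a = b = m satisfies (i) and (ii); and if α₀ < m < β₀, then the choice a = α₀, b = β₀ satisfies (i) and (ii). -/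

import Mathlib

/-!
Since `Ψ'' s = θ / (1 - s²) - θ₀` changes sign exactly at `±s*`, `Ψ'` is N-shaped on `(-1, 1)`:
increasing up to `-s*`, decreasing on `[-s*, s*]`, increasing after `s*`. Hence `α₀ < -s*`,
`Ψ'(α₀) = Ψ'(s*)` is the least value of `Ψ'` on `[α₀, 1)`, and `Ψ'` increases strictly on
`(-1, α₀]`; so `Ψ'(r) < Ψ'(s)` whenever `r < α₀` and `r < s`. Symmetrically `β₀ > s*` and
`Ψ'(r) < Ψ'(s)` whenever `β₀ < s` and `r < s`. The two comparisons give all the claims.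
-/

open Set

section NShaped

variable {f : ℝ → ℝ} {l p q u a b r s : ℝ}

theorem lt_left_of_apply_eq_right (hanti : StrictAntiOn f (Icc p q)) (haq : a < q)
    (hfa : f a = f q) : a < p := by
  by_contra! hpa
  exact (hanti ⟨hpa, haq.le⟩ ⟨hpa.trans haq.le, le_rfl⟩ haq).ne' hfa

theorem right_lt_of_apply_eq_left (hanti : StrictAntiOn f (Icc p q)) (hpb : p < b)
    (hfb : f b = f p) : q < b := by
  by_contra! hbq
  exact (hanti ⟨le_rfl, hpb.le.trans hbq⟩ ⟨hpb.le, hbq⟩ hpb).ne hfb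

theorem isMinOn_of_apply_eq_valley (hmono₁ : MonotoneOn f (Ioc l p))
    (hanti : AntitoneOn f (Icc p q)) (hmono₂ : MonotoneOn f (Ico q u)) (hla : l < a)
    (hap : a ≤ p) (hfa : f a = f q) : IsMinOn f (Ico a u) a := by
  refine isMinOn_iff.2 fun s hs ↦ ?_
  rcases le_or_gt s p with hsp | hps
  · exact hmono₁ ⟨hla, hap⟩ ⟨hla.trans_le hs.1, hsp⟩ hs.1
  rw [hfa]
  rcases le_or_gt s q with hsq | hqs
  · exact hanti ⟨hps.le, hsq⟩ ⟨hps.le.trans hsq, le_rfl⟩ hsq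
  · exact hmono₂ ⟨le_rfl, hqs.trans hs.2⟩ ⟨hqs.le, hs.2⟩ hqs.le

theorem isMaxOn_of_apply_eq_peak (hmono₁ : MonotoneOn f (Ioc l p))
    (hanti : AntitoneOn f (Icc p q)) (hmono₂ : MonotoneOn f (Ico q u)) (hqb : q ≤ b)
    (hbu : b < u) (hfb : f b = f p) : IsMaxOn f (Ioc l b) b := by
  refine isMaxOn_iff.2 fun r hr ↦ ?_
  rcases le_or_gt q r with hqr | hrq
  · exact hmono₂ ⟨hqr, hr.2.trans_lt hbu⟩ ⟨hqb, hbu⟩ hr.2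
  rw [hfb]
  rcases le_or_gt p r with hpr | hrp
  · exact hanti ⟨le_rfl, hpr.trans hrq.le⟩ ⟨hpr, hrq.le⟩ hpr
  · exact hmono₁ ⟨hr.1, hrp.le⟩ ⟨hr.1.trans hrp, le_rfl⟩ hrp.le

theorem lt_of_strictMonoOn_of_isMinOn (hmono : StrictMonoOn f (Ioc l a))
    (hmin : IsMinOn f (Ico a u) a) (hr : r ∈ Ioo l a) (hs : s ∈ Ioo r u) : f r < f s := by
  rcases le_or_gt s a with hsa | has
  · exact hmono ⟨hr.1, hr.2.le⟩ ⟨hr.1.trans hs.1, hsa⟩ hs.1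
  · exact (hmono ⟨hr.1, hr.2.le⟩ ⟨hr.1.trans hr.2, le_rfl⟩ hr.2).trans_le
      (isMinOn_iff.1 hmin s ⟨has.le, hs.2⟩)

theorem lt_of_strictMonoOn_of_isMaxOn (hmono : StrictMonoOn f (Ico b u))
    (hmax : IsMaxOn f (Ioc l b) b) (hs : s ∈ Ioo b u) (hr : r ∈ Ioo l s) : f r < f s := by
  rcases le_or_gt b r with hbr | hrb
  · exact hmono ⟨hbr, hr.2.trans hs.2⟩ ⟨hs.1.le, hs.2⟩ hr.2
  · exact (isMaxOn_iff.1 hmax r ⟨hr.1, hrb.le⟩).trans_lt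
      (hmono ⟨le_rfl, hs.1.trans hs.2⟩ ⟨hs.1.le, hs.2⟩ hs.1)

end NShaped

noncomputable def floryHugginsDeriv (θ θ₀ s : ℝ) : ℝ :=
  θ / 2 * Real.log ((1 + s) / (1 - s)) - θ₀ * s

section FloryHuggins

variable {θ θ₀ : ℝ}

theorem hasDerivAt_floryHugginsDeriv {s : ℝ} (hs : s ∈ Ioo (-1 : ℝ) 1) :
    HasDerivAt (floryHugginsDeriv θ θ₀) (θ / (1 - s ^ 2) - θ₀) s := by
  have h₁ : 1 + s ≠ 0 := by linarith [hs.1]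
  have h₂ : 1 - s ≠ 0 := by linarith [hs.2]
  have hquot : HasDerivAt (fun s : ℝ => (1 + s) / (1 - s)) (2 / (1 - s) ^ 2) s :=
    (((hasDerivAt_id' s).const_add 1).div ((hasDerivAt_id' s).const_sub 1) h₂).congr_deriv
      (by ring)
  refine (((hquot.log (div_ne_zero h₁ h₂)).const_mul (θ / 2)).sub
    ((hasDerivAt_id' s).const_mul θ₀)).congr_deriv ?_
  rw [show 1 - s ^ 2 = (1 + s) * (1 - s) by ring]
  field_simp

theorem continuousOn_floryHugginsDeriv {D : Set ℝ} (hD : D ⊆ Ioo (-1 : ℝ) 1) :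
    ContinuousOn (floryHugginsDeriv θ θ₀) D := fun _ hx =>
  (hasDerivAt_floryHugginsDeriv (hD hx)).continuousAt.continuousWithinAt

theorem floryHugginsDeriv_deriv_eq (hθ₀ : 0 < θ₀) {s : ℝ} (hs : s ∈ Ioo (-1 : ℝ) 1) :
    deriv (floryHugginsDeriv θ θ₀) s = θ₀ * (s ^ 2 - (1 - θ / θ₀)) / (1 - s ^ 2) := by
  have : 1 - s ^ 2 ≠ 0 := by nlinarith [hs.1, hs.2]
  rw [(hasDerivAt_floryHugginsDeriv hs).deriv]
  field_simp
  ring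

theorem strictMonoOn_floryHugginsDeriv (hθ₀ : 0 < θ₀) {D : Set ℝ} (hD : Convex ℝ D)
    (hD₁ : D ⊆ Ioo (-1 : ℝ) 1) (hsq : ∀ x ∈ interior D, 1 - θ / θ₀ < x ^ 2) :
    StrictMonoOn (floryHugginsDeriv θ θ₀) D := by
  refine strictMonoOn_of_deriv_pos hD (continuousOn_floryHugginsDeriv hD₁) fun x hx => ?_
  have hx₁ := hD₁ (interior_subset hx)
  rw [floryHugginsDeriv_deriv_eq hθ₀ hx₁]
  have := hsq x hx
  exact div_pos (mul_pos hθ₀ (by linarith)) (by nlinarith [hx₁.1, hx₁.2])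

theorem strictAntiOn_floryHugginsDeriv (hθ₀ : 0 < θ₀) {D : Set ℝ} (hD : Convex ℝ D)
    (hD₁ : D ⊆ Ioo (-1 : ℝ) 1) (hsq : ∀ x ∈ interior D, x ^ 2 < 1 - θ / θ₀) :
    StrictAntiOn (floryHugginsDeriv θ θ₀) D := by
  refine strictAntiOn_of_deriv_neg hD (continuousOn_floryHugginsDeriv hD₁) fun x hx => ?_
  have hx₁ := hD₁ (interior_subset hx)
  rw [floryHugginsDeriv_deriv_eq hθ₀ hx₁]
  have := hsq x hx
  exact div_neg_of_neg_of_pos (mul_neg_of_pos_of_neg hθ₀ (by linarith))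
    (by nlinarith [hx₁.1, hx₁.2])

theorem floryHugginsDeriv_nShaped (hθ : 0 < θ) (hθθ₀ : θ < θ₀) :
    StrictMonoOn (floryHugginsDeriv θ θ₀) (Ioc (-1) (-√(1 - θ / θ₀))) ∧
    StrictAntiOn (floryHugginsDeriv θ θ₀) (Icc (-√(1 - θ / θ₀)) √(1 - θ / θ₀)) ∧
    StrictMonoOn (floryHugginsDeriv θ θ₀) (Ico √(1 - θ / θ₀) 1) := by
  have hθ₀ : 0 < θ₀ := hθ.trans hθθ₀
  have hratio : 0 < θ / θ₀ := div_pos hθ hθ₀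
  set c := √(1 - θ / θ₀)
  have hc₀ : 0 ≤ c := Real.sqrt_nonneg _
  have hc : c ^ 2 = 1 - θ / θ₀ := Real.sq_sqrt (by linarith [(div_lt_one hθ₀).2 hθθ₀])
  have hc₁ : c < 1 := by nlinarith
  refine ⟨?_, ?_, ?_⟩
  · refine strictMonoOn_floryHugginsDeriv hθ₀ (convex_Ioc _ _)
      (Ioc_subset_Ioo_right (by linarith)) fun x hx => ?_
    rw [interior_Ioc] at hx
    nlinarith [hx.2]
  · refine strictAntiOn_floryHugginsDeriv hθ₀ (convex_Icc _ _)
      (Icc_subset_Ioo (by linarith) hc₁) fun x hx => ?_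
    rw [interior_Icc] at hx
    nlinarith [hx.1, hx.2]
  · refine strictMonoOn_floryHugginsDeriv hθ₀ (convex_Ico _ _)
      (Ico_subset_Ioo_left (by linarith)) fun x hx => ?_
    rw [interior_Ico] at hx
    nlinarith [hx.1]

theorem floryHugginsDeriv_lt_of_lt_valley (hθ : 0 < θ) (hθθ₀ : θ < θ₀) {α₀ : ℝ}
    (hα₀ : α₀ ∈ Ioo (-1 : ℝ) 0)
    (hα₀val : floryHugginsDeriv θ θ₀ α₀ = floryHugginsDeriv θ θ₀ √(1 - θ / θ₀)) :
    ∀ r ∈ Ioo (-1) α₀, ∀ s ∈ Ioo r 1,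
      floryHugginsDeriv θ θ₀ r < floryHugginsDeriv θ θ₀ s := by
  intro r hr s hs
  obtain ⟨hmono₁, hanti, hmono₂⟩ := floryHugginsDeriv_nShaped hθ hθθ₀
  have hα₀c : α₀ < -√(1 - θ / θ₀) := lt_left_of_apply_eq_right hanti
    (hα₀.2.trans_le (Real.sqrt_nonneg _)) hα₀val
  exact lt_of_strictMonoOn_of_isMinOn (hmono₁.mono (Ioc_subset_Ioc_right hα₀c.le))
    (isMinOn_of_apply_eq_valley hmono₁.monotoneOn hanti.antitoneOn hmono₂.monotoneOn
      hα₀.1 hα₀c.le hα₀val) hr hs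

theorem floryHugginsDeriv_lt_of_peak_lt (hθ : 0 < θ) (hθθ₀ : θ < θ₀) {β₀ : ℝ}
    (hβ₀ : β₀ ∈ Ioo (0 : ℝ) 1)
    (hβ₀val : floryHugginsDeriv θ θ₀ β₀ = floryHugginsDeriv θ θ₀ (-√(1 - θ / θ₀))) :
    ∀ s ∈ Ioo β₀ 1, ∀ r ∈ Ioo (-1) s,
      floryHugginsDeriv θ θ₀ r < floryHugginsDeriv θ θ₀ s := by
  intro s hs r hr
  obtain ⟨hmono₁, hanti, hmono₂⟩ := floryHugginsDeriv_nShaped hθ hθθ₀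
  have hcβ₀ : √(1 - θ / θ₀) < β₀ := right_lt_of_apply_eq_left hanti
    ((neg_nonpos.2 (Real.sqrt_nonneg _)).trans_lt hβ₀.1) hβ₀val
  exact lt_of_strictMonoOn_of_isMaxOn (hmono₂.mono (Ico_subset_Ico_left hcβ₀.le))
    (isMaxOn_of_apply_eq_peak hmono₁.monotoneOn hanti.antitoneOn hmono₂.monotoneOn
      hcβ₀.le hβ₀.2 hβ₀val) hs hr

end FloryHuggins

/-- For any mean `m ∈ (-1,1)` there are thresholds `a ≤ m ≤ b` making the comparison
properties (i) and (ii) for `Ψ'` hold; moreover `a = b = m` works when `m ≤ α₀` or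
`m ≥ β₀`, and `a = α₀`, `b = β₀` works when `α₀ < m < β₀`. -/
theorem stmt9 (θ θ₀ : ℝ) (hθ : 0 < θ) (hθθ₀ : θ < θ₀)
    (Ψ' : ℝ → ℝ)
    (hΨ' : ∀ s, Ψ' s = θ / 2 * Real.log ((1 + s) / (1 - s)) - θ₀ * s)
    (sstar : ℝ) (hsstar : sstar = Real.sqrt (1 - θ / θ₀))
    (α₀ β₀ : ℝ)
    (hα₀ : α₀ ∈ Set.Ioo (-1 : ℝ) 0) (hα₀val : Ψ' α₀ = Ψ' sstar)
    (hβ₀ : β₀ ∈ Set.Ioo (0 : ℝ) 1) (hβ₀val : Ψ' β₀ = Ψ' (-sstar)) :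
    ∀ m ∈ Set.Ioo (-1 : ℝ) 1,
      (∃ a b : ℝ, a ∈ Set.Ioo (-1 : ℝ) 1 ∧ b ∈ Set.Ioo (-1 : ℝ) 1 ∧
        a ≤ m ∧ m ≤ b ∧
        (∀ r ∈ Set.Ioo (-1 : ℝ) m, ∀ s ∈ Set.Ioo b 1, Ψ' r < Ψ' s) ∧
        (∀ r ∈ Set.Ioo (-1 : ℝ) a, ∀ s ∈ Set.Ioo m 1, Ψ' r < Ψ' s)) ∧
      ((m ≤ α₀ ∨ β₀ ≤ m) →
        (∀ r ∈ Set.Ioo (-1 : ℝ) m, ∀ s ∈ Set.Ioo m 1, Ψ' r < Ψ' s)) ∧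
      ((α₀ < m ∧ m < β₀) →
        (∀ r ∈ Set.Ioo (-1 : ℝ) m, ∀ s ∈ Set.Ioo β₀ 1, Ψ' r < Ψ' s) ∧
        (∀ r ∈ Set.Ioo (-1 : ℝ) α₀, ∀ s ∈ Set.Ioo m 1, Ψ' r < Ψ' s)) := by
  obtain rfl : Ψ' = floryHugginsDeriv θ θ₀ := funext hΨ'
  subst hsstar
  have valley := floryHugginsDeriv_lt_of_lt_valley hθ hθθ₀ hα₀ hα₀val
  have peak := floryHugginsDeriv_lt_of_peak_lt hθ hθθ₀ hβ₀ hβ₀val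
  intro m hm
  have outer (h : m ≤ α₀ ∨ β₀ ≤ m) : ∀ r ∈ Ioo (-1 : ℝ) m, ∀ s ∈ Ioo m 1,
      floryHugginsDeriv θ θ₀ r < floryHugginsDeriv θ θ₀ s := fun r hr s hs ↦ by
    rcases h with h | h
    · exact valley r ⟨hr.1, hr.2.trans_le h⟩ s ⟨hr.2.trans hs.1, hs.2⟩
    · exact peak s ⟨h.trans_lt hs.1, hs.2⟩ r ⟨hr.1, hr.2.trans hs.1⟩
  have inner (h : α₀ < m ∧ m < β₀) :
      (∀ r ∈ Ioo (-1 : ℝ) m, ∀ s ∈ Ioo β₀ 1,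
        floryHugginsDeriv θ θ₀ r < floryHugginsDeriv θ θ₀ s) ∧
      ∀ r ∈ Ioo (-1 : ℝ) α₀, ∀ s ∈ Ioo m 1,
        floryHugginsDeriv θ θ₀ r < floryHugginsDeriv θ θ₀ s :=
    ⟨fun r hr s hs ↦ peak s hs r ⟨hr.1, hr.2.trans (h.2.trans hs.1)⟩,
      fun r hr s hs ↦ valley r hr s ⟨hr.2.trans (h.1.trans hs.1), hs.2⟩⟩
  refine ⟨?_, outer, inner⟩
  by_cases h : m ≤ α₀ ∨ β₀ ≤ m
  · exact ⟨m, m, hm, hm, le_rfl, le_rfl, outer h, outer h⟩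
  · simp only [not_or, not_le] at h
    exact ⟨α₀, β₀, ⟨hα₀.1, hα₀.2.trans one_pos⟩, ⟨neg_one_lt_zero.trans hβ₀.1, hβ₀.2⟩,
      h.1.le, h.2.le, inner ⟨h.1, h.2⟩⟩
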